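/- If a graph G contains an induced cycle H of length at least 6 and a vertex w outside H that has at most two neighbors in H, then the complement of G contains a wheel on five vertices: concretely, if H = v1 v2 ... v_n (n ≥ 6) and w has at most one neighbor among v2, v3, v4, v5, v6, then {w, v2, v3, v5, v6} induces a wheel in the complement of G. -/
import Mathlib


open SimpleGraph

/-- `x, a, b, c, d` form a wheel on five vertices in `G`: the five vertices are
distinct, `a b c d` is an induced 4-cycle, and `x` is adjacent to at least three
of the cycle vertices. -/
def IsWheel5 {V : Type*} (G : SimpleGraph V) (x a b c d : V) : Prop :=
  ({x, a, b, c, d} : Set V).ncard = 5 ∧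
  G.Adj a b ∧ G.Adj b c ∧ G.Adj c d ∧ G.Adj d a ∧ ¬ G.Adj a c ∧ ¬ G.Adj b d ∧
  ((G.Adj x a ∧ G.Adj x b ∧ G.Adj x c) ∨ (G.Adj x a ∧ G.Adj x b ∧ G.Adj x d) ∨
   (G.Adj x a ∧ G.Adj x c ∧ G.Adj x d) ∨ (G.Adj x b ∧ G.Adj x c ∧ G.Adj x d))

lemma fin_sub_val_of_le {n i j : ℕ} (hi : i < n) (hj : j ≤ i) :
    ((⟨i, hi⟩ - ⟨j, by omega⟩ : Fin n)).val = i - j := by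
  simp only [Fin.sub_def]
  have h : n - j + i = n + (i - j) := by omega
  rw [h, Nat.add_mod_left, Nat.mod_eq_of_lt (by omega)]

lemma fin_sub_val_of_gt {n i j : ℕ} (hi : i < n) (hj : j < i) :
    ((⟨j, by omega⟩ - ⟨i, hi⟩ : Fin n)).val = n - (i - j) := by
  simp only [Fin.sub_def]
  rw [Nat.mod_eq_of_lt (by omega)]; omega

lemma cycle_adj_iff {n i j : ℕ} (hn : 2 ≤ n) (hi : i < n) (hj : j ≤ i) :
    (cycleGraph n).Adj ⟨i, hi⟩ ⟨j, by omega⟩ ↔ (i - j = 1 ∨ n - (i - j) = 1) := by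
  rcases eq_or_lt_of_le hj with rfl | hj'
  · exact iff_of_false (cycleGraph n).irrefl (by omega)
  · rw [cycleGraph_adj', fin_sub_val_of_le hi hj, fin_sub_val_of_gt hi hj']

/-- If `G` contains an induced cycle `v1 … vn` with `n ≥ 6` and a vertex `w` outside
it having at most one neighbor among `v2, v3, v4, v5, v6`, then
`{w, v2, v3, v5, v6}` induces a wheel (with center `w` and rim `v2 v5 v3 v6`)
in the complement of `G`. -/
theorem stmt_7 {V : Type*} [Fintype V] [DecidableEq V] (G : SimpleGraph V)
    [DecidableRel G.Adj] (n : ℕ) (hn : 6 ≤ n) (e : cycleGraph n ↪g G) (w : V)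
    (hw : w ∉ Set.range e)
    (hnb : ((({e ⟨1, by omega⟩, e ⟨2, by omega⟩, e ⟨3, by omega⟩, e ⟨4, by omega⟩,
        e ⟨5, by omega⟩} : Finset V)).filter (fun v => G.Adj w v)).card ≤ 1) :
    IsWheel5 Gᶜ w (e ⟨1, by omega⟩) (e ⟨4, by omega⟩) (e ⟨2, by omega⟩) (e ⟨5, by omega⟩) := by
  set v1 : V := e ⟨1, by omega⟩ with hv1
  set v2 : V := e ⟨2, by omega⟩ with hv2
  set v3 : V := e ⟨3, by omega⟩ with hv3
  set v4 : V := e ⟨4, by omega⟩ with hv4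
  set v5 : V := e ⟨5, by omega⟩ with hv5
  have hinj := e.injective
  have hne : ∀ (i j : ℕ) (hi : i < n) (hj : j < n), i ≠ j →
      e ⟨i, hi⟩ ≠ e ⟨j, hj⟩ := by
    intro i j hi hj hij h
    exact hij (by simpa [Fin.ext_iff] using hinj h)
  have hwne : ∀ v : Fin n, w ≠ e v := by
    intro v h
    exact hw ⟨v, h.symm⟩
  have hadj : ∀ (i j : ℕ) (hi : i < n) (hj : j ≤ i),
      G.Adj (e ⟨i, hi⟩) (e ⟨j, by omega⟩) ↔ (i - j = 1 ∨ n - (i - j) = 1) := by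
    intro i j hi hj
    rw [e.map_adj_iff, cycle_adj_iff (by omega) hi hj]
  -- adjacency facts among v1 v2 v4 v5
  have h41 : ¬ G.Adj v4 v1 := by rw [hv4, hv1, hadj 4 1 (by omega) (by omega)]; omega
  have h42 : ¬ G.Adj v4 v2 := by rw [hv4, hv2, hadj 4 2 (by omega) (by omega)]; omega
  have h52 : ¬ G.Adj v5 v2 := by rw [hv5, hv2, hadj 5 2 (by omega) (by omega)]; omega
  have h51 : ¬ G.Adj v5 v1 := by rw [hv5, hv1, hadj 5 1 (by omega) (by omega)]; omega
  have h21 : G.Adj v2 v1 := by rw [hv2, hv1, hadj 2 1 (by omega) (by omega)]; omega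
  have h54 : G.Adj v5 v4 := by rw [hv5, hv4, hadj 5 4 (by omega) (by omega)]; omega
  -- at most one neighbor of w among v1 v2 v4 v5
  have hpair : ∀ x y : V, x ∈ ({v1, v2, v3, v4, v5} : Finset V) →
      y ∈ ({v1, v2, v3, v4, v5} : Finset V) → x ≠ y →
      G.Adj w x → G.Adj w y → False := by
    intro x y hx hy hxy ax ay
    have hsub : ({x, y} : Finset V) ⊆
        ({v1, v2, v3, v4, v5} : Finset V).filter (fun v => G.Adj w v) := by
      intro z hz
      simp only [Finset.mem_insert, Finset.mem_singleton] at hz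
      rcases hz with rfl | rfl <;> simp [Finset.mem_filter, hx, hy, ax, ay]
    have := Finset.card_le_card hsub
    rw [Finset.card_insert_of_notMem (by simpa using hxy), Finset.card_singleton] at this
    omega
  have m1 : v1 ∈ ({v1, v2, v3, v4, v5} : Finset V) := by simp
  have m2 : v2 ∈ ({v1, v2, v3, v4, v5} : Finset V) := by simp
  have m4 : v4 ∈ ({v1, v2, v3, v4, v5} : Finset V) := by simp
  have m5 : v5 ∈ ({v1, v2, v3, v4, v5} : Finset V) := by simp
  have n12 : v1 ≠ v2 := hne 1 2 (by omega) (by omega) (by omega)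
  have n14 : v1 ≠ v4 := hne 1 4 (by omega) (by omega) (by omega)
  have n15 : v1 ≠ v5 := hne 1 5 (by omega) (by omega) (by omega)
  have n24 : v2 ≠ v4 := hne 2 4 (by omega) (by omega) (by omega)
  have n25 : v2 ≠ v5 := hne 2 5 (by omega) (by omega) (by omega)
  have n45 : v4 ≠ v5 := hne 4 5 (by omega) (by omega) (by omega)
  refine ⟨?_, ?_, ?_, ?_, ?_, ?_, ?_, ?_⟩
  · -- ncard = 5
    rw [Set.ncard_insert_of_notMem (by
        simp only [Set.mem_insert_iff, Set.mem_singleton_iff]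
        push_neg
        exact ⟨hwne _, hwne _, hwne _, hwne _⟩),
      Set.ncard_insert_of_notMem (by
        simp only [Set.mem_insert_iff, Set.mem_singleton_iff]
        push_neg
        exact ⟨n14, n12, n15⟩),
      Set.ncard_insert_of_notMem (by
        simp only [Set.mem_insert_iff, Set.mem_singleton_iff]
        push_neg
        exact ⟨n24.symm, n45⟩),
      Set.ncard_insert_of_notMem (by simpa using n25),
      Set.ncard_singleton]
  · exact ⟨n14, fun h => h41 h.symm⟩
  · exact ⟨n24.symm, h42⟩
  · exact ⟨n25, fun h => h52 h.symm⟩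
  · exact ⟨n15.symm, h51⟩
  · intro h
    exact h.2 h21.symm
  · intro h
    exact h.2 h54.symm
  · -- at least three non-neighbors of w among v1 v4 v2 v5
    have e1 : G.Adj w v1 → G.Adj w v4 → False := hpair v1 v4 m1 m4 n14
    have e2 : G.Adj w v1 → G.Adj w v2 → False := hpair v1 v2 m1 m2 n12
    have e3 : G.Adj w v1 → G.Adj w v5 → False := hpair v1 v5 m1 m5 n15
    have e4 : G.Adj w v4 → G.Adj w v2 → False := hpair v4 v2 m4 m2 n24.symm
    have e5 : G.Adj w v4 → G.Adj w v5 → False := hpair v4 v5 m4 m5 n45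
    have e6 : G.Adj w v2 → G.Adj w v5 → False := hpair v2 v5 m2 m5 n25
    simp only [compl_adj]
    by_cases a1 : G.Adj w v1
    · exact Or.inr (Or.inr (Or.inr ⟨⟨hwne _, fun h => e1 a1 h⟩,
        ⟨hwne _, fun h => e2 a1 h⟩, ⟨hwne _, fun h => e3 a1 h⟩⟩))
    · by_cases a4 : G.Adj w v4
      · exact Or.inr (Or.inr (Or.inl ⟨⟨hwne _, a1⟩,
          ⟨hwne _, fun h => e4 a4 h⟩, ⟨hwne _, fun h => e5 a4 h⟩⟩))
      · by_cases a2 : G.Adj w v2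
        · exact Or.inr (Or.inl ⟨⟨hwne _, a1⟩, ⟨hwne _, a4⟩,
            ⟨hwne _, fun h => e6 a2 h⟩⟩)
        · exact Or.inl ⟨⟨hwne _, a1⟩, ⟨hwne _, a4⟩, ⟨hwne _, a2⟩⟩
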